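/- arXiv:2410.07651 — 7 statements merged into one kernel-verified Lean document; each statement's English description precedes it below -/
import Mathlib

section
/- Let n ∈ ℕ, γ > 0, and let ν₁, ν, σ, c₁, r₁, t be real numbers, h̄ ∈ ℝ^{n+1}, x̄ ∈ ℝⁿ. For d ∈ {0,1}ⁿ and x ∈ ℝⁿ define L(d,x) = Σ_{i=1}^{n} h̄ᵢ·(x̄ᵢ − dᵢxᵢ) + h̄_{n+1}·σ + ν₁·Σ_{i=1}^{n} x̄ᵢ dᵢ xᵢ − ν₁c₁ + γ·Σ_{i=1}^{n} dᵢ² xᵢ² − γ r₁² + ν·Σ_{i=1}^{n} dᵢ − ν·t. Then inf_{d∈{0,1}ⁿ, x∈ℝⁿ} L(d,x) = Σ_{i=1}^{n} h̄ᵢ x̄ᵢ + h̄_{n+1}σ + Σ_{i=1}^{n} min( ν − (h̄ᵢ − ν₁ x̄ᵢ)²/(4γ), 0 ) − ν₁ c₁ − γ r₁² − ν t, and the infimum is attained. -/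
private lemma qnonneg (γ : ℝ) (hγ : 0 < γ) (ν a d x : ℝ) (hd : d = 0 ∨ d = 1) :
    0 ≤ γ * d ^ 2 * x ^ 2 - a * (d * x) + ν * d - min (ν - a ^ 2 / (4 * γ)) 0 := by
  rcases hd with h | h
  · subst h
    have : min (ν - a ^ 2 / (4 * γ)) 0 ≤ 0 := min_le_right _ _
    nlinarith
  · subst h
    have h1 : min (ν - a ^ 2 / (4 * γ)) 0 ≤ ν - a ^ 2 / (4 * γ) := min_le_left _ _
    have h2 : 0 ≤ γ * (x - a / (2 * γ)) ^ 2 := by positivity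
    have h3 : γ * (x - a / (2 * γ)) ^ 2 = γ * x ^ 2 - a * x + a ^ 2 / (4 * γ) := by
      field_simp; ring
    nlinarith

private lemma qrewrite {n : ℕ} (γ : ℝ) (ν₁ ν σ c₁ r₁ t : ℝ)
    (hbar : Fin (n + 1) → ℝ) (xbar : Fin n → ℝ) (d x : Fin n → ℝ) :
    ((∑ i : Fin n, hbar i.castSucc * (xbar i - d i * x i)) + hbar (Fin.last n) * σ
      + ν₁ * (∑ i : Fin n, xbar i * d i * x i) - ν₁ * c₁
      + γ * (∑ i : Fin n, (d i) ^ 2 * (x i) ^ 2) - γ * r₁ ^ 2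
      + ν * (∑ i : Fin n, d i) - ν * t)
    = ((∑ i : Fin n, hbar i.castSucc * xbar i) + hbar (Fin.last n) * σ
        + (∑ i : Fin n, min (ν - (hbar i.castSucc - ν₁ * xbar i) ^ 2 / (4 * γ)) 0)
        - ν₁ * c₁ - γ * r₁ ^ 2 - ν * t)
      + ∑ i : Fin n, (γ * (d i) ^ 2 * (x i) ^ 2
          - (hbar i.castSucc - ν₁ * xbar i) * (d i * x i) + ν * d i
          - min (ν - (hbar i.castSucc - ν₁ * xbar i) ^ 2 / (4 * γ)) 0) := by
  have hsum : ∑ i : Fin n, (hbar i.castSucc * (xbar i - d i * x i)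
        + ν₁ * (xbar i * d i * x i) + γ * ((d i) ^ 2 * (x i) ^ 2) + ν * d i)
      = ∑ i : Fin n, (hbar i.castSucc * xbar i
        + min (ν - (hbar i.castSucc - ν₁ * xbar i) ^ 2 / (4 * γ)) 0
        + (γ * (d i) ^ 2 * (x i) ^ 2
          - (hbar i.castSucc - ν₁ * xbar i) * (d i * x i) + ν * d i
          - min (ν - (hbar i.castSucc - ν₁ * xbar i) ^ 2 / (4 * γ)) 0)) :=
    Finset.sum_congr rfl fun i _ => by ring
  simp only [Finset.sum_add_distrib] at hsum
  simp only [Finset.mul_sum]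
  linarith [hsum]

/-- Minimization of the full Lagrangian of the perturbation term `D^{(per)}`:
the infimum over binary masks `d ∈ {0,1}ⁿ` and `x ∈ ℝⁿ` of `L(d,x)` equals
`Σ h̄ᵢ x̄ᵢ + h̄_{n+1} σ + Σ min(ν - (h̄ᵢ - ν₁ x̄ᵢ)²/(4γ), 0) - ν₁ c₁ - γ r₁² - ν t`,
and it is attained. -/
theorem stmt4 {n : ℕ} (γ : ℝ) (hγ : 0 < γ) (ν₁ ν σ c₁ r₁ t : ℝ)
    (hbar : Fin (n + 1) → ℝ) (xbar : Fin n → ℝ)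
    (L : (Fin n → ℝ) → (Fin n → ℝ) → ℝ)
    (hL : ∀ d x, L d x =
      (∑ i : Fin n, hbar i.castSucc * (xbar i - d i * x i)) + hbar (Fin.last n) * σ
      + ν₁ * (∑ i : Fin n, xbar i * d i * x i) - ν₁ * c₁
      + γ * (∑ i : Fin n, (d i) ^ 2 * (x i) ^ 2) - γ * r₁ ^ 2
      + ν * (∑ i : Fin n, d i) - ν * t) :
    IsLeast { z : ℝ | ∃ d x : Fin n → ℝ, (∀ i, d i = 0 ∨ d i = 1) ∧ z = L d x }
      ((∑ i : Fin n, hbar i.castSucc * xbar i) + hbar (Fin.last n) * σ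
        + (∑ i : Fin n, min (ν - (hbar i.castSucc - ν₁ * xbar i) ^ 2 / (4 * γ)) 0)
        - ν₁ * c₁ - γ * r₁ ^ 2 - ν * t) := by
  classical
  constructor
  · -- membership: optimal d, x
    set D : Fin n → ℝ := fun i =>
      if ν - (hbar i.castSucc - ν₁ * xbar i) ^ 2 / (4 * γ) ≤ 0 then 1 else 0 with hD
    set X : Fin n → ℝ := fun i => (hbar i.castSucc - ν₁ * xbar i) / (2 * γ) with hX
    refine ⟨D, X, fun i => by rw [hD]; dsimp only; split_ifs <;> simp, ?_⟩
    rw [hL, qrewrite γ ν₁ ν σ c₁ r₁ t hbar xbar]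
    have h0 : ∑ i : Fin n, (γ * (D i) ^ 2 * (X i) ^ 2
        - (hbar i.castSucc - ν₁ * xbar i) * (D i * X i) + ν * D i
        - min (ν - (hbar i.castSucc - ν₁ * xbar i) ^ 2 / (4 * γ)) 0) = 0 := by
      refine Finset.sum_eq_zero fun i _ => ?_
      rw [hD, hX]
      dsimp only
      split_ifs with h
      · rw [min_eq_left (by linarith)]
        field_simp
        ring
      · rw [min_eq_right (by linarith)]
        ring
    rw [h0, add_zero]
  · -- lower bound
    rintro z ⟨d, x, hd, rfl⟩
    rw [hL, qrewrite γ ν₁ ν σ c₁ r₁ t hbar xbar]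
    have h1 : 0 ≤ ∑ i : Fin n, (γ * (d i) ^ 2 * (x i) ^ 2
        - (hbar i.castSucc - ν₁ * xbar i) * (d i * x i) + ν * d i
        - min (ν - (hbar i.castSucc - ν₁ * xbar i) ^ 2 / (4 * γ)) 0) :=
      Finset.sum_nonneg fun i _ => qnonneg γ hγ ν _ (d i) (x i) (hd i)
    linarith
end

section
/- Let γ > 0 and ν ≥ 0, and set ā = 2√(γν). Then ∫_ℝ min( ν − h²/(4γ), 0 ) dγ₁(h) = 2·[ −(1/(4γ))·( ā·e^{−ā²/2}/√(2π) + (1/2)·erfc(ā/√2) ) + (ν/2)·erfc(ā/√2) ]. -/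
/-!
With `φ` the standard normal density, the integrand `φ h · min (ν - h²/(4γ)) 0` is even and
vanishes for `|h| ≤ ā`, so the integral is twice `∫_ā^∞ φ h (ν - h²/(4γ)) dh`. Integrating by parts
with `(-h φ h)' = h² φ h - φ h` gives `∫_a^∞ h² φ = a φ a + ∫_a^∞ φ`, and the substitution
`h = √2 t` gives `∫_a^∞ φ = erfc (a/√2) / 2`.
-/

open MeasureTheory ProbabilityTheory Real

/-- The error function `erf x = (2/√π) ∫₀ˣ e^{-t²} dt`. -/
noncomputable def erf (x : ℝ) : ℝ := (2 / Real.sqrt π) * ∫ t in (0:ℝ)..x, Real.exp (-t ^ 2)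

/-- The complementary error function `erfc x = 1 - erf x`. -/
noncomputable def erfc (x : ℝ) : ℝ := 1 - erf x

open Filter Set Topology

lemma integral_eq_two_mul_integral_Ioi_of_even {f : ℝ → ℝ} (heven : ∀ x, f (-x) = f x)
    {a : ℝ} (ha : 0 ≤ a) (hzero : ∀ x ∈ Ioc 0 a, f x = 0) :
    ∫ x, f x = 2 * ∫ x in Ioi a, f x := by
  have habs : ∀ x, f |x| = f x := fun x => by
    rcases abs_choice x with h | h <;> rw [h]; exact heven x
  rw [← integral_congr_ae (ae_of_all _ habs), integral_comp_abs,
    setIntegral_eq_of_subset_of_forall_sdiff_eq_zero measurableSet_Ioi (Ioi_subset_Ioi ha)]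
  rintro x ⟨hx0, hxa⟩
  exact hzero x ⟨hx0, not_lt.mp hxa⟩

lemma gaussianPDFReal_zero_one (x : ℝ) :
    gaussianPDFReal 0 1 x = (√(2 * π))⁻¹ * exp (-x ^ 2 / 2) := by
  simp [gaussianPDFReal]

lemma hasDerivAt_gaussianPDFReal_zero_one (x : ℝ) :
    HasDerivAt (gaussianPDFReal 0 1) (-x * gaussianPDFReal 0 1 x) x := by
  rw [funext gaussianPDFReal_zero_one]
  exact ((((hasDerivAt_pow 2 x).fun_neg.div_const 2).exp).const_mul _).congr_deriv
    (by push_cast; ring)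

lemma integrable_sq_mul_gaussianPDFReal_zero_one :
    Integrable fun x : ℝ => x ^ 2 * gaussianPDFReal 0 1 x := by
  have h := (integrable_rpow_mul_exp_neg_mul_sq (b := 1 / 2) (by norm_num)
    (s := 2) (by norm_num)).const_mul (√(2 * π))⁻¹
  refine h.congr (ae_of_all _ fun x => ?_)
  simp only [gaussianPDFReal_zero_one]
  rw [show (2 : ℝ) = (2 : ℕ) by norm_num, rpow_natCast]
  ring_nf

lemma tendsto_mul_gaussianPDFReal_zero_one_atTop :
    Tendsto (fun x : ℝ => x * gaussianPDFReal 0 1 x) atTop (𝓝 0) := by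
  have hexp : Tendsto (fun x : ℝ => exp (-(1 / 2) * x)) atTop (𝓝 0) :=
    tendsto_exp_atBot.comp (tendsto_id.const_mul_atTop_of_neg (by norm_num))
  have h := ((rpow_mul_exp_neg_mul_sq_isLittleO_exp_neg (b := 1 / 2) (by norm_num) 1).trans_tendsto
    hexp).const_mul (√(2 * π))⁻¹
  rw [mul_zero] at h
  refine h.congr fun x => ?_
  rw [gaussianPDFReal_zero_one, rpow_one]
  ring_nf

lemma integral_Ioi_sq_mul_gaussianPDFReal_zero_one (a : ℝ) :
    ∫ x in Ioi a, x ^ 2 * gaussianPDFReal 0 1 x =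
      a * gaussianPDFReal 0 1 a + ∫ x in Ioi a, gaussianPDFReal 0 1 x := by
  have hderiv : ∀ x ∈ Ici a, HasDerivAt (fun y => -(y * gaussianPDFReal 0 1 y))
      (x ^ 2 * gaussianPDFReal 0 1 x - gaussianPDFReal 0 1 x) x := fun x _ =>
    ((hasDerivAt_id x).mul (hasDerivAt_gaussianPDFReal_zero_one x)).fun_neg.congr_deriv
      (by rw [id]; ring)
  have h := integral_Ioi_of_hasDerivAt_of_tendsto' hderiv
    (integrable_sq_mul_gaussianPDFReal_zero_one.sub (integrable_gaussianPDFReal 0 1)).integrableOn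
    tendsto_mul_gaussianPDFReal_zero_one_atTop.neg
  rw [integral_sub integrable_sq_mul_gaussianPDFReal_zero_one.integrableOn
    (integrable_gaussianPDFReal 0 1).integrableOn, neg_zero] at h
  linarith

lemma integral_Ioi_gaussianPDFReal_zero_one (a : ℝ) :
    ∫ x in Ioi a, gaussianPDFReal 0 1 x = erfc (a / √2) / 2 := by
  have hsqrt : √(2 * π) = √2 * √π := sqrt_mul zero_le_two π
  have hhalf : ∫ x in Ioi 0, gaussianPDFReal 0 1 x = 1 / 2 := by
    have h := integral_gaussian_Ioi (1 / 2)
    have hexp : ∀ x : ℝ, exp (-x ^ 2 / 2) = exp (-(1 / 2) * x ^ 2) := fun x => by ring_nf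
    simp_rw [gaussianPDFReal_zero_one, integral_const_mul, hexp, h,
      show π / (1 / 2) = 2 * π by ring]
    field_simp
  have herf : ∫ x in 0..a, gaussianPDFReal 0 1 x = erf (a / √2) / 2 := by
    have h := intervalIntegral.integral_comp_div (fun t => exp (-t ^ 2)) (a := 0) (b := a)
      (sqrt_ne_zero'.mpr zero_lt_two)
    have hexp : ∀ x : ℝ, exp (-x ^ 2 / 2) = exp (-(x / √2) ^ 2) := fun x => by
      rw [div_pow, sq_sqrt zero_le_two]; ring_nf
    simp_rw [gaussianPDFReal_zero_one, intervalIntegral.integral_const_mul, hexp, h, zero_div,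
      smul_eq_mul, erf, hsqrt]
    field_simp
  have hsplit := intervalIntegral.integral_Ioi_sub_Ioi'
    (integrable_gaussianPDFReal 0 1).integrableOn (integrable_gaussianPDFReal 0 1).integrableOn
    (a := 0) (b := a)
  rw [erfc]
  linarith

lemma integral_Ioi_gaussianPDFReal_zero_one_mul_sub_sq_div (a ν c : ℝ) :
    ∫ x in Ioi a, gaussianPDFReal 0 1 x * (ν - x ^ 2 / c) =
      ν * (erfc (a / √2) / 2) - (a * gaussianPDFReal 0 1 a + erfc (a / √2) / 2) / c := by
  have hdistrib : ∀ x : ℝ, gaussianPDFReal 0 1 x * (ν - x ^ 2 / c) =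
      ν * gaussianPDFReal 0 1 x - c⁻¹ * (x ^ 2 * gaussianPDFReal 0 1 x) := fun x => by ring
  simp_rw [hdistrib]
  rw [integral_sub ((integrable_gaussianPDFReal 0 1).const_mul ν).integrableOn
      (integrable_sq_mul_gaussianPDFReal_zero_one.const_mul c⁻¹).integrableOn,
    integral_const_mul, integral_const_mul, integral_Ioi_sq_mul_gaussianPDFReal_zero_one,
    integral_Ioi_gaussianPDFReal_zero_one]
  ring

theorem stmt6_general (γ ν : ℝ) (hγ : 0 < γ)
    (abar : ℝ) (habar : abar = 2 * Real.sqrt (γ * ν)) :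
    ∫ h : ℝ, min (ν - h ^ 2 / (4 * γ)) 0 ∂(gaussianReal 0 1) =
      2 * (-(1 / (4 * γ)) *
          (abar * Real.exp (-abar ^ 2 / 2) / Real.sqrt (2 * π)
            + (1 / 2) * erfc (abar / Real.sqrt 2))
        + (ν / 2) * erfc (abar / Real.sqrt 2)) := by
  have hā : 0 ≤ abar := habar ▸ by positivity
  have hvanish : ∀ x ∈ Ioc 0 abar, min (ν - x ^ 2 / (4 * γ)) 0 = 0 := by
    rintro x ⟨hx0, hxa⟩
    have hx_sq : (x / 2) ^ 2 ≤ γ * ν := (le_sqrt' (half_pos hx0)).mp (by linarith)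
    exact min_eq_right (sub_nonneg.mpr ((div_le_iff₀ (by positivity)).mpr (by linarith)))
  have htail : ∀ x ∈ Ioi abar, min (ν - x ^ 2 / (4 * γ)) 0 = ν - x ^ 2 / (4 * γ) := by
    rintro x (hx : abar < x)
    have hx_sq : γ * ν < (x / 2) ^ 2 := (sqrt_lt' (by linarith)).mp (by linarith)
    exact min_eq_left (sub_nonpos.mpr ((le_div_iff₀ (by positivity)).mpr (by linarith)))
  rw [integral_gaussianReal_eq_integral_smul one_ne_zero,
    integral_eq_two_mul_integral_Ioi_of_even (fun x => by simp [gaussianPDFReal_zero_one]) hā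
      (fun x hx => by rw [hvanish x hx, smul_zero]),
    setIntegral_congr_fun measurableSet_Ioi (fun x hx => by rw [htail x hx, smul_eq_mul]),
    integral_Ioi_gaussianPDFReal_zero_one_mul_sub_sq_div, gaussianPDFReal_zero_one]
  field_simp
  ring

/-- The Gaussian integral `f₂₁` appearing at the first level of lifting:
`∫ min(ν - h²/(4γ), 0) dγ₁(h)` in closed form. -/
theorem stmt6 (γ ν : ℝ) (hγ : 0 < γ) (hν : 0 ≤ ν)
    (abar : ℝ) (habar : abar = 2 * Real.sqrt (γ * ν)) :
    ∫ h : ℝ, min (ν - h ^ 2 / (4 * γ)) 0 ∂(gaussianReal 0 1) =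
      2 * (-(1 / (4 * γ)) *
          (abar * Real.exp (-abar ^ 2 / 2) / Real.sqrt (2 * π)
            + (1 / 2) * erfc (abar / Real.sqrt 2))
        + (ν / 2) * erfc (abar / Real.sqrt 2)) :=
  stmt6_general γ ν hγ abar habar
end

section
/- Let γ > 0, r₂ > 0, c₂ > 0 and p₂ ∈ [0,1], and set T = 2γ + c₂·r₂·(1 − p₂). Then −(1/c₂)·∫_ℝ log( ∫_ℝ exp( −(c₂·r₂/(4γ))·( √(1−p₂)·u + √p₂·h )² ) dγ₁(u) ) dγ₁(h) = (1/(2c₂))·log( T/(2γ) ) + p₂·r₂/(2T). -/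
open MeasureTheory ProbabilityTheory Real

lemma my_integral_rexp_quadratic {b : ℝ} (hb : 0 < b) (c d : ℝ) :
    ∫ x : ℝ, Real.exp (-b * x ^ 2 + c * x + d)
      = Real.sqrt (π / b) * Real.exp (d + c ^ 2 / (4 * b)) := by
  have hb' : ((-b : ℝ) : ℂ).re < 0 := by simpa using hb
  have h := integral_cexp_quadratic (b := ((-b : ℝ) : ℂ)) hb' (c : ℂ) (d : ℂ)
  have hL : (∫ x : ℝ, Complex.exp (((-b : ℝ) : ℂ) * x ^ 2 + c * x + d))
      = ((∫ x : ℝ, Real.exp (-b * x ^ 2 + c * x + d) : ℝ) : ℂ) := by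
    have heq : ∀ x : ℝ, Complex.exp (((-b : ℝ) : ℂ) * x ^ 2 + c * x + d)
        = ((Real.exp (-b * x ^ 2 + c * x + d) : ℝ) : ℂ) := by
      intro x; rw [Complex.ofReal_exp]; push_cast; ring_nf
    simp_rw [heq]
    exact integral_ofReal
  have hR : ((π : ℂ) / -((-b : ℝ) : ℂ)) ^ (1 / 2 : ℂ)
        * Complex.exp ((d : ℂ) - (c : ℂ) ^ 2 / (4 * ((-b : ℝ) : ℂ)))
      = ((Real.sqrt (π / b) * Real.exp (d + c ^ 2 / (4 * b)) : ℝ) : ℂ) := by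
    have h1 : ((π : ℂ) / -((-b : ℝ) : ℂ)) = ((π / b : ℝ) : ℂ) := by push_cast; ring
    have h2 : ((π / b : ℝ) : ℂ) ^ (1 / 2 : ℂ) = ((Real.sqrt (π / b) : ℝ) : ℂ) := by
      rw [Real.sqrt_eq_rpow, Complex.ofReal_cpow (by positivity : (0:ℝ) ≤ π / b)]
      norm_num
    have h3 : ((d : ℂ) - (c : ℂ) ^ 2 / (4 * ((-b : ℝ) : ℂ)))
        = ((d + c ^ 2 / (4 * b) : ℝ) : ℂ) := by
      have hbne : (b : ℂ) ≠ 0 := by exact_mod_cast hb.ne'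
      push_cast
      field_simp
      ring
    rw [h1, h2, h3, ← Complex.ofReal_exp, ← Complex.ofReal_mul]
  rw [hL, hR] at h
  exact_mod_cast h

lemma my_integral_gaussianReal (g : ℝ → ℝ) :
    ∫ x, g x ∂(gaussianReal 0 1) = ∫ x, gaussianPDFReal 0 1 x * g x := by
  rw [gaussianReal_of_var_ne_zero 0 one_ne_zero]
  have hpdf : gaussianPDF 0 1
      = fun x => ((Real.toNNReal (gaussianPDFReal 0 1 x) : NNReal) : ENNReal) := by
    ext x; rw [gaussianPDF_def]; rfl
  rw [hpdf, integral_withDensity_eq_integral_smul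
    ((measurable_gaussianPDFReal 0 1).real_toNNReal) g]
  congr 1
  ext x
  simp [NNReal.smul_def, Real.coe_toNNReal _ (gaussianPDFReal_nonneg 0 1 x)]

lemma my_second_moment_lebesgue :
    ∫ x : ℝ, x ^ 2 * Real.exp (-(2⁻¹ : ℝ) * x ^ 2) = Real.sqrt (2 * π) := by
  have h0 : (fun x : ℝ => x ^ 2 * Real.exp (-(2⁻¹ : ℝ) * x ^ 2))
      = fun x : ℝ => |x| ^ 2 * Real.exp (-(2⁻¹ : ℝ) * |x| ^ 2) := by
    ext x; rw [sq_abs]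
  rw [h0, integral_comp_abs (f := fun x : ℝ => x ^ 2 * Real.exp (-(2⁻¹ : ℝ) * x ^ 2))]
  have h1 : ∀ x ∈ Set.Ioi (0:ℝ), x ^ 2 * Real.exp (-(2⁻¹ : ℝ) * x ^ 2)
      = x ^ (2:ℝ) * Real.exp (-(2⁻¹ : ℝ) * x ^ (2:ℝ)) := by
    intro x _
    rw [show (2:ℝ) = ((2:ℕ):ℝ) by norm_num, Real.rpow_natCast]
  rw [setIntegral_congr_fun measurableSet_Ioi h1,
    integral_rpow_mul_exp_neg_mul_rpow (by norm_num) (by norm_num) (by norm_num : (0:ℝ) < 2⁻¹)]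
  have hG : Real.Gamma (((2:ℝ) + 1) / 2) = (1 / 2) * Real.sqrt π := by
    rw [show ((2:ℝ) + 1) / 2 = 1/2 + 1 by norm_num, Real.Gamma_add_one (by norm_num),
      Real.Gamma_one_half_eq]
  have h2 : ((2:ℝ)⁻¹) ^ (-((2:ℝ)+1) / 2) = (2:ℝ) ^ ((3/2 : ℝ)) := by
    rw [show (-((2:ℝ)+1)/2) = -(3/2 : ℝ) by norm_num,
      Real.inv_rpow (by norm_num), ← Real.rpow_neg (by norm_num), neg_neg]
  rw [hG, h2, Real.sqrt_mul (by norm_num), Real.sqrt_eq_rpow 2,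
    show (3/2:ℝ) = 1/2 + 1 by norm_num, Real.rpow_add (by norm_num), Real.rpow_one]
  ring

lemma my_integrable_sq_gauss :
    Integrable (fun x : ℝ => x ^ 2 * Real.exp (-(2⁻¹ : ℝ) * x ^ 2)) := by
  have h := integrable_rpow_mul_exp_neg_mul_sq (by norm_num : (0:ℝ) < 2⁻¹)
    (s := 2) (by norm_num)
  have heq : (fun x : ℝ => x ^ (2:ℝ) * Real.exp (-(2⁻¹:ℝ) * x ^ 2))
      = fun x : ℝ => x ^ 2 * Real.exp (-(2⁻¹ : ℝ) * x ^ 2) := by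
    ext x
    rw [show (2:ℝ) = ((2:ℕ):ℝ) by norm_num, Real.rpow_natCast]
  rwa [heq] at h

lemma my_pdf_sq_eq : (fun x : ℝ => gaussianPDFReal 0 1 x * x ^ 2)
    = fun x : ℝ => (Real.sqrt (2 * π))⁻¹ * (x ^ 2 * Real.exp (-(2⁻¹ : ℝ) * x ^ 2)) := by
  ext x
  simp only [gaussianPDFReal, NNReal.coe_one, mul_one, sub_zero]
  ring_nf

lemma my_outer_eval (K1 K2 : ℝ) :
    ∫ x : ℝ, (K1 + K2 * x ^ 2) ∂(gaussianReal 0 1) = K1 + K2 := by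
  rw [my_integral_gaussianReal]
  have hsplit : ∀ x : ℝ, gaussianPDFReal 0 1 x * (K1 + K2 * x ^ 2)
      = K1 * gaussianPDFReal 0 1 x + K2 * (gaussianPDFReal 0 1 x * x ^ 2) := by
    intro x; ring
  simp_rw [hsplit]
  have hint2 : Integrable (fun x : ℝ => gaussianPDFReal 0 1 x * x ^ 2) := by
    rw [my_pdf_sq_eq]
    exact my_integrable_sq_gauss.const_mul _
  rw [integral_add ((integrable_gaussianPDFReal 0 1).const_mul K1) (hint2.const_mul K2),
    integral_const_mul, integral_const_mul, integral_gaussianPDFReal_eq_one 0 one_ne_zero]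
  have hm : ∫ x : ℝ, gaussianPDFReal 0 1 x * x ^ 2 = 1 := by
    rw [my_pdf_sq_eq, integral_const_mul, my_second_moment_lebesgue]
    rw [inv_mul_cancel₀ (by positivity)]
  rw [hm, mul_one, mul_one]

lemma my_inner_eval {a β s : ℝ} (ha : 0 < a) (hβ : 0 ≤ β) (hs : s ^ 2 = β) (c : ℝ) :
    ∫ u : ℝ, Real.exp (-a * (s * u + c) ^ 2) ∂(gaussianReal 0 1)
      = (Real.sqrt (1 + 2 * a * β))⁻¹
        * Real.exp (-(a * c ^ 2 / (1 + 2 * a * β))) := by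
  subst hs
  set B : ℝ := a * s ^ 2 + 1/2 with hB_def
  have hBpos : 0 < B := by positivity
  have hS2B : 1 + 2 * a * s ^ 2 = 2 * B := by rw [hB_def]; ring
  rw [my_integral_gaussianReal]
  have hptwise : ∀ u : ℝ, gaussianPDFReal 0 1 u
        * Real.exp (-a * (s * u + c) ^ 2)
      = (Real.sqrt (2 * π))⁻¹ * Real.exp (-B * u ^ 2
          + (-(2 * a * s * c)) * u + (-(a * c ^ 2))) := by
    intro u
    simp only [gaussianPDFReal, NNReal.coe_one, mul_one, sub_zero]
    rw [mul_assoc, ← Real.exp_add]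
    congr 1
    rw [hB_def]
    ring
  simp_rw [hptwise]
  rw [integral_const_mul, my_integral_rexp_quadratic hBpos]
  have hpre : (Real.sqrt (2 * π))⁻¹ * Real.sqrt (π / B)
      = (Real.sqrt (1 + 2 * a * s ^ 2))⁻¹ := by
    rw [hS2B, ← Real.sqrt_inv (2 * π), ← Real.sqrt_mul (by positivity), ← Real.sqrt_inv]
    congr 1
    field_simp
  have hexp : -(a * c ^ 2) + (-(2 * a * s * c)) ^ 2 / (4 * B)
      = -(a * c ^ 2 / (1 + 2 * a * s ^ 2)) := by
    rw [hS2B, hB_def]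
    field_simp
    ring
  rw [← mul_assoc, hpre, hexp]

/-- Closed-form evaluation of the spherical term at the second level of lifting:
`-(1/c₂) ∫ log( ∫ exp(-(c₂r₂/(4γ)) (√(1-p₂) u + √p₂ h)²) dγ₁(u) ) dγ₁(h)
  = (1/(2c₂)) log(T/(2γ)) + p₂ r₂/(2T)` with `T = 2γ + c₂ r₂ (1-p₂)`. -/
theorem stmt11 (γ r₂ c₂ p₂ : ℝ) (hγ : 0 < γ) (hr : 0 < r₂) (hc : 0 < c₂)
    (hp : p₂ ∈ Set.Icc (0:ℝ) 1) (T : ℝ) (hT : T = 2 * γ + c₂ * r₂ * (1 - p₂)) :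
    -(1 / c₂) * ∫ h : ℝ, Real.log (∫ u : ℝ,
        Real.exp (-(c₂ * r₂ / (4 * γ)) *
          (Real.sqrt (1 - p₂) * u + Real.sqrt p₂ * h) ^ 2) ∂(gaussianReal 0 1))
      ∂(gaussianReal 0 1)
    = (1 / (2 * c₂)) * Real.log (T / (2 * γ)) + p₂ * r₂ / (2 * T) := by
  obtain ⟨hp0, hp1⟩ := hp
  have ha : 0 < c₂ * r₂ / (4 * γ) := by positivity
  have hβ : (0:ℝ) ≤ 1 - p₂ := by linarith
  have hTpos : 0 < T := by nlinarith [mul_nonneg (mul_nonneg hc.le hr.le) hβ]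
  have hs : Real.sqrt (1 - p₂) ^ 2 = 1 - p₂ := Real.sq_sqrt hβ
  have hApos : 0 < 1 + 2 * (c₂ * r₂ / (4 * γ)) * (1 - p₂) := by
    have := mul_nonneg (mul_nonneg (by norm_num : (0:ℝ) ≤ 2) ha.le) hβ
    linarith
  have hAT : 1 + 2 * (c₂ * r₂ / (4 * γ)) * (1 - p₂) = T / (2 * γ) := by
    rw [hT]; field_simp; ring
  have hinner : ∀ h : ℝ, (∫ u : ℝ, Real.exp (-(c₂ * r₂ / (4 * γ)) *
        (Real.sqrt (1 - p₂) * u + Real.sqrt p₂ * h) ^ 2) ∂(gaussianReal 0 1))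
      = (Real.sqrt (1 + 2 * (c₂ * r₂ / (4 * γ)) * (1 - p₂)))⁻¹
        * Real.exp (-(c₂ * r₂ / (4 * γ) * (Real.sqrt p₂ * h) ^ 2
            / (1 + 2 * (c₂ * r₂ / (4 * γ)) * (1 - p₂)))) :=
    fun h => my_inner_eval ha hβ hs _
  have hlog : ∀ h : ℝ,
      Real.log ((Real.sqrt (1 + 2 * (c₂ * r₂ / (4 * γ)) * (1 - p₂)))⁻¹
        * Real.exp (-(c₂ * r₂ / (4 * γ) * (Real.sqrt p₂ * h) ^ 2
            / (1 + 2 * (c₂ * r₂ / (4 * γ)) * (1 - p₂)))))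
      = -(1/2) * Real.log (1 + 2 * (c₂ * r₂ / (4 * γ)) * (1 - p₂))
        + (-(c₂ * r₂ / (4 * γ) * p₂ / (1 + 2 * (c₂ * r₂ / (4 * γ)) * (1 - p₂)))) * h ^ 2 := by
    intro h
    rw [Real.log_mul (by positivity) (Real.exp_ne_zero _), Real.log_inv, Real.log_exp,
      Real.log_sqrt hApos.le, mul_pow, Real.sq_sqrt hp0]
    ring
  simp_rw [hinner, hlog, my_outer_eval]
  rw [hAT]
  field_simp
  ring
end

section
/- Let γ > 0, r₂ > 0, c₂ > 0, c₃ > 0 and 0 ≤ p₃ ≤ p₂ ≤ 1, and set T₂ = 2γ + c₂·r₂·(1 − p₂) and T₃ = T₂ + c₃·r₂·(p₂ − p₃). Then −(1/c₃)·∫_ℝ log( ∫_ℝ ( ∫_ℝ exp( −(c₂·r₂/(4γ))·( √(1−p₂)·u + √(p₂−p₃)·v + √p₃·w )² ) dγ₁(u) )^{c₃/c₂} dγ₁(v) ) dγ₁(w) = (1/(2c₂))·log( T₂/(2γ) ) + (1/(2c₃))·log( T₃/T₂ ) + p₃·r₂/(2T₃). -/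
open MeasureTheory ProbabilityTheory Real
open scoped ENNReal NNReal

lemma integral_gauss01 (f : ℝ → ℝ) :
    ∫ x, f x ∂(gaussianReal 0 1)
      = ∫ x, ((Real.sqrt (2 * π))⁻¹ * Real.exp (-x ^ 2 / 2)) * f x := by
  rw [gaussianReal_of_var_ne_zero 0 one_ne_zero]
  have hmeas : Measurable fun x : ℝ => (gaussianPDFReal 0 1 x).toNNReal :=
    (measurable_gaussianPDFReal 0 1).real_toNNReal
  rw [show (gaussianPDF 0 1) = (fun x => ((gaussianPDFReal 0 1 x).toNNReal : ℝ≥0∞)) from rfl,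
    integral_withDensity_eq_integral_smul hmeas]
  refine integral_congr_ae (Filter.Eventually.of_forall fun x => ?_)
  dsimp only
  rw [NNReal.smul_def, smul_eq_mul, Real.coe_toNNReal _ (gaussianPDFReal_nonneg 0 1 x)]
  simp [gaussianPDFReal]

lemma integral_exp_quad (A B : ℝ) (hA : 0 < A) :
    ∫ u : ℝ, Real.exp (B * u - A * u ^ 2)
      = Real.sqrt (π / A) * Real.exp (B ^ 2 / (4 * A)) := by
  have hAne : A ≠ 0 := ne_of_gt hA
  calc ∫ u : ℝ, Real.exp (B * u - A * u ^ 2)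
      = ∫ u : ℝ, Real.exp (-A * (u - B / (2 * A)) ^ 2) * Real.exp (B ^ 2 / (4 * A)) := by
        refine integral_congr_ae (Filter.Eventually.of_forall fun u => ?_)
        dsimp only
        rw [← Real.exp_add]
        congr 1
        field_simp
        ring
    _ = (∫ u : ℝ, Real.exp (-A * (u - B / (2 * A)) ^ 2)) * Real.exp (B ^ 2 / (4 * A)) :=
        integral_mul_const _ _
    _ = (∫ u : ℝ, Real.exp (-A * u ^ 2)) * Real.exp (B ^ 2 / (4 * A)) := by
        rw [integral_sub_right_eq_self (μ := volume) (fun u => Real.exp (-A * u ^ 2)) (B / (2 * A))]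
    _ = Real.sqrt (π / A) * Real.exp (B ^ 2 / (4 * A)) := by rw [integral_gaussian]

lemma gauss_key (a b x : ℝ) (ha : 0 < a) :
    ∫ u : ℝ, Real.exp (-a * (b * u + x) ^ 2) ∂(gaussianReal 0 1)
      = (Real.sqrt (1 + 2 * a * b ^ 2))⁻¹
          * Real.exp (-(a / (1 + 2 * a * b ^ 2)) * x ^ 2) := by
  have hA : (0:ℝ) < a * b ^ 2 + 1 / 2 := by positivity
  have hS : (0:ℝ) < 1 + 2 * a * b ^ 2 := by positivity
  rw [integral_gauss01]
  calc ∫ u : ℝ, ((Real.sqrt (2 * π))⁻¹ * Real.exp (-u ^ 2 / 2))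
          * Real.exp (-a * (b * u + x) ^ 2)
      = ∫ u : ℝ, ((Real.sqrt (2 * π))⁻¹ * Real.exp (-a * x ^ 2))
          * Real.exp ((-(2 * a * b * x)) * u - (a * b ^ 2 + 1 / 2) * u ^ 2) := by
        refine integral_congr_ae (Filter.Eventually.of_forall fun u => ?_)
        dsimp only
        rw [mul_assoc, ← Real.exp_add, mul_assoc, ← Real.exp_add]
        congr 1
        ring
    _ = ((Real.sqrt (2 * π))⁻¹ * Real.exp (-a * x ^ 2))
          * ∫ u : ℝ, Real.exp ((-(2 * a * b * x)) * u - (a * b ^ 2 + 1 / 2) * u ^ 2) :=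
        integral_const_mul _ _
    _ = ((Real.sqrt (2 * π))⁻¹ * Real.exp (-a * x ^ 2))
          * (Real.sqrt (π / (a * b ^ 2 + 1 / 2))
              * Real.exp ((-(2 * a * b * x)) ^ 2 / (4 * (a * b ^ 2 + 1 / 2)))) := by
        rw [integral_exp_quad _ _ hA]
    _ = (Real.sqrt (1 + 2 * a * b ^ 2))⁻¹
          * Real.exp (-(a / (1 + 2 * a * b ^ 2)) * x ^ 2) := by
        have hc : (Real.sqrt (2 * π))⁻¹ * Real.sqrt (π / (a * b ^ 2 + 1 / 2))
            = (Real.sqrt (1 + 2 * a * b ^ 2))⁻¹ := by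
          rw [← Real.sqrt_inv, ← Real.sqrt_mul (by positivity)]
          rw [← Real.sqrt_inv]
          congr 1
          field_simp
          ring
        have he : Real.exp (-a * x ^ 2)
              * Real.exp ((-(2 * a * b * x)) ^ 2 / (4 * (a * b ^ 2 + 1 / 2)))
            = Real.exp (-(a / (1 + 2 * a * b ^ 2)) * x ^ 2) := by
          rw [← Real.exp_add]
          congr 1
          field_simp
          ring
        calc ((Real.sqrt (2 * π))⁻¹ * Real.exp (-a * x ^ 2))
              * (Real.sqrt (π / (a * b ^ 2 + 1 / 2))
                  * Real.exp ((-(2 * a * b * x)) ^ 2 / (4 * (a * b ^ 2 + 1 / 2))))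
            = ((Real.sqrt (2 * π))⁻¹ * Real.sqrt (π / (a * b ^ 2 + 1 / 2)))
              * (Real.exp (-a * x ^ 2)
                  * Real.exp ((-(2 * a * b * x)) ^ 2 / (4 * (a * b ^ 2 + 1 / 2)))) := by ring
          _ = _ := by rw [hc, he]

lemma integrable_sq_exp_vol : Integrable (fun x : ℝ => x ^ 2 * Real.exp (-(1/2 : ℝ) * x ^ 2)) := by
  have h := integrable_rpow_mul_exp_neg_mul_sq (b := (1/2 : ℝ)) (by norm_num)
    (s := (2 : ℝ)) (by norm_num)
  have : (fun x : ℝ => x ^ (2:ℝ) * Real.exp (-(1/2 : ℝ) * x ^ 2))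
      = fun x : ℝ => x ^ 2 * Real.exp (-(1/2 : ℝ) * x ^ 2) := by
    funext x
    rw [show ((2:ℝ)) = ((2:ℕ):ℝ) by norm_num, Real.rpow_natCast]
  rwa [this] at h

lemma integrable_sq_gauss : Integrable (fun x : ℝ => x ^ 2) (gaussianReal 0 1) := by
  rw [gaussianReal_of_var_ne_zero 0 one_ne_zero,
    show (gaussianPDF 0 1) = (fun x => ((gaussianPDFReal 0 1 x).toNNReal : ℝ≥0∞)) from rfl,
    integrable_withDensity_iff_integrable_smul ((measurable_gaussianPDFReal 0 1).real_toNNReal)]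
  have : (fun x : ℝ => (gaussianPDFReal 0 1 x).toNNReal • x ^ 2)
      = fun x : ℝ => (Real.sqrt (2 * π))⁻¹ * (x ^ 2 * Real.exp (-(1/2 : ℝ) * x ^ 2)) := by
    funext x
    rw [NNReal.smul_def, smul_eq_mul, Real.coe_toNNReal _ (gaussianPDFReal_nonneg 0 1 x)]
    simp only [gaussianPDFReal, NNReal.coe_one, mul_one, sub_zero]
    rw [show -x ^ 2 / 2 = -(1/2 : ℝ) * x ^ 2 by ring]
    ring
  rw [this]
  exact integrable_sq_exp_vol.const_mul _

lemma second_moment_gauss : ∫ x : ℝ, x ^ 2 ∂(gaussianReal 0 1) = 1 := by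
  rw [integral_gauss01]
  have h1 : ∫ x : ℝ, ((Real.sqrt (2 * π))⁻¹ * Real.exp (-x ^ 2 / 2)) * x ^ 2
      = (Real.sqrt (2 * π))⁻¹ * ∫ x : ℝ, x ^ 2 * Real.exp (-(1/2 : ℝ) * x ^ 2) := by
    rw [← integral_const_mul]
    refine integral_congr_ae (Filter.Eventually.of_forall fun x => ?_)
    dsimp only
    rw [show -x ^ 2 / 2 = -(1/2 : ℝ) * x ^ 2 by ring]
    ring
  have h2 : ∫ x : ℝ, x ^ 2 * Real.exp (-(1/2 : ℝ) * x ^ 2) = Real.sqrt (2 * π) := by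
    have habs : ∫ x : ℝ, x ^ 2 * Real.exp (-(1/2 : ℝ) * x ^ 2)
        = ∫ x : ℝ, (fun t : ℝ => t ^ 2 * Real.exp (-(1/2 : ℝ) * t ^ 2)) |x| := by
      refine integral_congr_ae (Filter.Eventually.of_forall fun x => ?_)
      dsimp only
      rw [sq_abs]
    rw [habs, integral_comp_abs (f := fun t : ℝ => t ^ 2 * Real.exp (-(1/2 : ℝ) * t ^ 2))]
    have h3 : ∫ x in Set.Ioi (0:ℝ), x ^ 2 * Real.exp (-(1/2 : ℝ) * x ^ 2)
        = ((1/2 : ℝ)) ^ (-((2:ℝ) + 1) / 2) * (1 / 2) * Real.Gamma (((2:ℝ) + 1) / 2) := by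
      have h4 := integral_rpow_mul_exp_neg_mul_rpow (p := (2:ℝ)) (q := (2:ℝ)) (b := (1/2 : ℝ))
        (by norm_num) (by norm_num) (by norm_num)
      rw [← h4]
      refine setIntegral_congr_fun measurableSet_Ioi (fun x _ => ?_)
      rw [show ((2:ℝ)) = ((2:ℕ):ℝ) by norm_num, Real.rpow_natCast]
    rw [h3]
    have hgamma : Real.Gamma (((2:ℝ) + 1) / 2) = Real.sqrt π / 2 := by
      rw [show ((2:ℝ) + 1) / 2 = 1/2 + 1 by norm_num, Real.Gamma_add_one (by norm_num),
        Real.Gamma_one_half_eq]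
      ring
    have hpow : ((1/2 : ℝ)) ^ (-((2:ℝ) + 1) / 2) = 2 * Real.sqrt 2 := by
      rw [show -((2:ℝ) + 1) / 2 = -(3/2 : ℝ) by norm_num, one_div,
        Real.inv_rpow (by norm_num : (0:ℝ) ≤ 2), ← Real.rpow_neg (by norm_num : (0:ℝ) ≤ 2),
        neg_neg, show (3/2 : ℝ) = 1 + 1/2 by norm_num,
        Real.rpow_add (by norm_num : (0:ℝ) < 2), Real.rpow_one, ← Real.sqrt_eq_rpow]
    rw [hgamma, hpow, Real.sqrt_mul (by norm_num : (0:ℝ) ≤ 2)]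
    ring
  rw [h1, h2]
  rw [inv_mul_cancel₀ (ne_of_gt (Real.sqrt_pos.mpr (by positivity)))]

/-- Closed-form evaluation of the spherical term at the third level of lifting:
a triple Gaussian average with exponent `c₃/c₂` equals
`(1/(2c₂)) log(T₂/(2γ)) + (1/(2c₃)) log(T₃/T₂) + p₃ r₂/(2T₃)`. -/
theorem stmt12 (γ r₂ c₂ c₃ p₂ p₃ : ℝ) (hγ : 0 < γ) (hr : 0 < r₂)
    (hc₂ : 0 < c₂) (hc₃ : 0 < c₃) (hp₃ : 0 ≤ p₃) (hp₂₃ : p₃ ≤ p₂) (hp₂ : p₂ ≤ 1)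
    (T₂ T₃ : ℝ) (hT₂ : T₂ = 2 * γ + c₂ * r₂ * (1 - p₂))
    (hT₃ : T₃ = T₂ + c₃ * r₂ * (p₂ - p₃)) :
    -(1 / c₃) * ∫ w : ℝ, Real.log (∫ v : ℝ,
        (∫ u : ℝ, Real.exp (-(c₂ * r₂ / (4 * γ)) *
            (Real.sqrt (1 - p₂) * u + Real.sqrt (p₂ - p₃) * v
              + Real.sqrt p₃ * w) ^ 2) ∂(gaussianReal 0 1)) ^ (c₃ / c₂)
        ∂(gaussianReal 0 1)) ∂(gaussianReal 0 1)
    = (1 / (2 * c₂)) * Real.log (T₂ / (2 * γ))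
      + (1 / (2 * c₃)) * Real.log (T₃ / T₂) + p₃ * r₂ / (2 * T₃) := by
  have h1p : (0:ℝ) ≤ 1 - p₂ := by linarith
  have hpp : (0:ℝ) ≤ p₂ - p₃ := by linarith
  have hT2pos : 0 < T₂ := by
    have h : 0 ≤ c₂ * r₂ * (1 - p₂) := by positivity
    rw [hT₂]; linarith
  have hT3pos : 0 < T₃ := by
    have h : 0 ≤ c₃ * r₂ * (p₂ - p₃) := by positivity
    rw [hT₃]; linarith
  have ha₁ : 0 < c₂ * r₂ / (4 * γ) := div_pos (mul_pos hc₂ hr) (by linarith)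
  have ha₂ : 0 < c₃ * r₂ / (2 * T₂) := div_pos (mul_pos hc₃ hr) (by linarith)
  have hS₁pos : 0 < T₂ / (2 * γ) := div_pos hT2pos (by linarith)
  have hS₂pos : 0 < T₃ / T₂ := div_pos hT3pos hT2pos
  have hK₁pos : 0 < (Real.sqrt (T₂ / (2 * γ)))⁻¹ :=
    inv_pos.mpr (Real.sqrt_pos.mpr hS₁pos)
  have hK₂pos : 0 < (Real.sqrt (T₃ / T₂))⁻¹ :=
    inv_pos.mpr (Real.sqrt_pos.mpr hS₂pos)
  have hS₁ : 1 + 2 * (c₂ * r₂ / (4 * γ)) * (Real.sqrt (1 - p₂)) ^ 2 = T₂ / (2 * γ) := by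
    rw [Real.sq_sqrt h1p, hT₂]
    field_simp
    ring
  have hfrac₁ : (c₂ * r₂ / (4 * γ)) / (T₂ / (2 * γ)) = c₂ * r₂ / (2 * T₂) := by
    field_simp
    ring
  have hS₂ : 1 + 2 * (c₃ * r₂ / (2 * T₂)) * (Real.sqrt (p₂ - p₃)) ^ 2 = T₃ / T₂ := by
    rw [Real.sq_sqrt hpp, hT₃]
    field_simp
  have hfrac₂ : (c₃ * r₂ / (2 * T₂)) / (T₃ / T₂) = c₃ * r₂ / (2 * T₃) := by
    field_simp
  set C : ℝ := (c₃ / c₂) * Real.log (Real.sqrt (T₂ / (2 * γ)))⁻¹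
      + Real.log (Real.sqrt (T₃ / T₂))⁻¹ with hC
  set k : ℝ := c₃ * r₂ / (2 * T₃) * p₃ with hk
  have step1 : ∀ v w : ℝ,
      (∫ u : ℝ, Real.exp (-(c₂ * r₂ / (4 * γ)) *
          (Real.sqrt (1 - p₂) * u + Real.sqrt (p₂ - p₃) * v
            + Real.sqrt p₃ * w) ^ 2) ∂(gaussianReal 0 1))
      = (Real.sqrt (T₂ / (2 * γ)))⁻¹ * Real.exp (-(c₂ * r₂ / (2 * T₂)) *
          (Real.sqrt (p₂ - p₃) * v + Real.sqrt p₃ * w) ^ 2) := by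
    intro v w
    calc (∫ u : ℝ, Real.exp (-(c₂ * r₂ / (4 * γ)) *
            (Real.sqrt (1 - p₂) * u + Real.sqrt (p₂ - p₃) * v
              + Real.sqrt p₃ * w) ^ 2) ∂(gaussianReal 0 1))
        = ∫ u : ℝ, Real.exp (-(c₂ * r₂ / (4 * γ)) *
            (Real.sqrt (1 - p₂) * u + (Real.sqrt (p₂ - p₃) * v
              + Real.sqrt p₃ * w)) ^ 2) ∂(gaussianReal 0 1) := by
          refine integral_congr_ae (Filter.Eventually.of_forall fun u => ?_)
          dsimp only
          congr 1
          ring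
      _ = (Real.sqrt (1 + 2 * (c₂ * r₂ / (4 * γ)) * (Real.sqrt (1 - p₂)) ^ 2))⁻¹
            * Real.exp (-((c₂ * r₂ / (4 * γ)) /
                (1 + 2 * (c₂ * r₂ / (4 * γ)) * (Real.sqrt (1 - p₂)) ^ 2)) *
              (Real.sqrt (p₂ - p₃) * v + Real.sqrt p₃ * w) ^ 2) :=
          gauss_key _ _ _ ha₁
      _ = _ := by rw [hS₁, hfrac₁]
  have step2 : ∀ w : ℝ,
      (∫ v : ℝ, ((Real.sqrt (T₂ / (2 * γ)))⁻¹ * Real.exp (-(c₂ * r₂ / (2 * T₂)) *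
          (Real.sqrt (p₂ - p₃) * v + Real.sqrt p₃ * w) ^ 2)) ^ (c₃ / c₂)
          ∂(gaussianReal 0 1))
      = ((Real.sqrt (T₂ / (2 * γ)))⁻¹) ^ (c₃ / c₂)
          * ((Real.sqrt (T₃ / T₂))⁻¹
              * Real.exp (-(c₃ * r₂ / (2 * T₃)) * (p₃ * w ^ 2))) := by
    intro w
    calc (∫ v : ℝ, ((Real.sqrt (T₂ / (2 * γ)))⁻¹ * Real.exp (-(c₂ * r₂ / (2 * T₂)) *
            (Real.sqrt (p₂ - p₃) * v + Real.sqrt p₃ * w) ^ 2)) ^ (c₃ / c₂)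
            ∂(gaussianReal 0 1))
        = ∫ v : ℝ, ((Real.sqrt (T₂ / (2 * γ)))⁻¹) ^ (c₃ / c₂)
            * Real.exp (-(c₃ * r₂ / (2 * T₂)) *
              (Real.sqrt (p₂ - p₃) * v + Real.sqrt p₃ * w) ^ 2) ∂(gaussianReal 0 1) := by
          refine integral_congr_ae (Filter.Eventually.of_forall fun v => ?_)
          dsimp only
          rw [Real.mul_rpow hK₁pos.le (Real.exp_pos _).le, ← Real.exp_mul]
          congr 2
          field_simp
      _ = ((Real.sqrt (T₂ / (2 * γ)))⁻¹) ^ (c₃ / c₂)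
            * ∫ v : ℝ, Real.exp (-(c₃ * r₂ / (2 * T₂)) *
              (Real.sqrt (p₂ - p₃) * v + Real.sqrt p₃ * w) ^ 2) ∂(gaussianReal 0 1) :=
          integral_const_mul _ _
      _ = ((Real.sqrt (T₂ / (2 * γ)))⁻¹) ^ (c₃ / c₂)
            * ((Real.sqrt (1 + 2 * (c₃ * r₂ / (2 * T₂)) * (Real.sqrt (p₂ - p₃)) ^ 2))⁻¹
              * Real.exp (-((c₃ * r₂ / (2 * T₂)) /
                  (1 + 2 * (c₃ * r₂ / (2 * T₂)) * (Real.sqrt (p₂ - p₃)) ^ 2)) *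
                (Real.sqrt p₃ * w) ^ 2)) := by
          rw [gauss_key _ _ _ ha₂]
      _ = _ := by rw [hS₂, hfrac₂, mul_pow, Real.sq_sqrt hp₃]
  have hw : ∀ w : ℝ, Real.log (∫ v : ℝ,
        (∫ u : ℝ, Real.exp (-(c₂ * r₂ / (4 * γ)) *
            (Real.sqrt (1 - p₂) * u + Real.sqrt (p₂ - p₃) * v
              + Real.sqrt p₃ * w) ^ 2) ∂(gaussianReal 0 1)) ^ (c₃ / c₂)
        ∂(gaussianReal 0 1)) = C - k * w ^ 2 := by
    intro w
    have h2 : (∫ v : ℝ,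
        (∫ u : ℝ, Real.exp (-(c₂ * r₂ / (4 * γ)) *
            (Real.sqrt (1 - p₂) * u + Real.sqrt (p₂ - p₃) * v
              + Real.sqrt p₃ * w) ^ 2) ∂(gaussianReal 0 1)) ^ (c₃ / c₂)
        ∂(gaussianReal 0 1))
        = ((Real.sqrt (T₂ / (2 * γ)))⁻¹) ^ (c₃ / c₂)
          * ((Real.sqrt (T₃ / T₂))⁻¹
              * Real.exp (-(c₃ * r₂ / (2 * T₃)) * (p₃ * w ^ 2))) := by
      rw [← step2 w]
      refine integral_congr_ae (Filter.Eventually.of_forall fun v => ?_)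
      dsimp only
      rw [step1 v w]
    rw [h2, Real.log_mul (by positivity) (by positivity),
      Real.log_mul (by positivity) (Real.exp_ne_zero _),
      Real.log_exp, Real.log_rpow hK₁pos, hC, hk]
    ring
  rw [integral_congr_ae (Filter.Eventually.of_forall hw)]
  have hint : (∫ w : ℝ, (C - k * w ^ 2) ∂(gaussianReal 0 1)) = C - k := by
    have h := integral_sub (integrable_const (μ := gaussianReal 0 1) C)
      (integrable_sq_gauss.const_mul k)
    calc (∫ w : ℝ, (C - k * w ^ 2) ∂(gaussianReal 0 1))
        = (∫ _ : ℝ, C ∂(gaussianReal 0 1))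
            - ∫ w : ℝ, k * w ^ 2 ∂(gaussianReal 0 1) := h
      _ = C - k := by
          rw [integral_const_mul, second_moment_gauss, integral_const]
          simp
  rw [hint, hC, hk, Real.log_inv, Real.log_inv,
    Real.log_sqrt hS₁pos.le, Real.log_sqrt hS₂pos.le]
  field_simp
  ring
end

section
/- Let A, B, C, D, E ∈ ℝ with C > 2A² and D ≤ E. Then ∫_{ℝ∖[D,E]} exp( (A·h + B)²/C ) dγ₁(h) = ( √C / (2·√(C − 2A²)) ) · exp( B²/(C − 2A²) ) · (2 − Q), where Q = erf( (C·E − 2A²·E − 2A·B)/(√2·√C·√(C − 2A²)) ) − erf( (C·D − 2A²·D − 2A·B)/(√2·√C·√(C − 2A²)) ). -/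
/-!
Multiplying the standard Gaussian density by `exp ((A h + B)² / C)` and completing the square
gives a constant multiple of the Gaussian kernel `exp (-k (h - m)²)`, with
`k = (C - 2A²) / (2C) > 0` and `m = 2AB / (C - 2A²)`. Its integral over `ℝ` is `√(π / k)`, and
over `[D, E]` the substitution `t = √k (h - m)` turns it into a difference of `erf` values.
-/

open MeasureTheory ProbabilityTheory Real
open scoped NNReal

lemma setIntegral_gaussianReal_eq_setIntegral_smul {E : Type*} [NormedAddCommGroup E]
    [NormedSpace ℝ E] {μ : ℝ} {v : ℝ≥0} {f : ℝ → E} {s : Set ℝ} (hv : v ≠ 0)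
    (hs : MeasurableSet s) :
    ∫ x in s, f x ∂(gaussianReal μ v) = ∫ x in s, gaussianPDFReal μ v x • f x := by
  rw [← integral_indicator hs, ← integral_indicator hs, integral_gaussianReal_eq_integral_smul hv]
  congr 1 with x
  by_cases hx : x ∈ s <;> simp [hx]

lemma gaussianPDFReal_mul_exp_sq_div {A B C : ℝ} (hC : C ≠ 0) (hK : C - 2 * A ^ 2 ≠ 0) (h : ℝ) :
    gaussianPDFReal 0 1 h * exp ((A * h + B) ^ 2 / C)
      = (√(2 * π))⁻¹ * exp (B ^ 2 / (C - 2 * A ^ 2)) *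
          exp (-((C - 2 * A ^ 2) / (2 * C)) * (h - 2 * A * B / (C - 2 * A ^ 2)) ^ 2) := by
  simp only [gaussianPDFReal, NNReal.coe_one, mul_one, sub_zero, mul_assoc, ← exp_add]
  congr 2
  field_simp
  ring

lemma intervalIntegral_exp_neg_sq (a b : ℝ) :
    ∫ t in a..b, exp (-t ^ 2) = √π / 2 * (erf b - erf a) := by
  have hint : ∀ x : ℝ, IntervalIntegrable (fun t ↦ exp (-t ^ 2)) volume 0 x := fun x ↦
    (by fun_prop : Continuous fun t : ℝ ↦ exp (-t ^ 2)).intervalIntegrable _ _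
  have : √π ≠ 0 := by positivity
  rw [erf, erf, ← intervalIntegral.integral_interval_sub_left (hint b) (hint a)]
  field_simp

lemma integral_exp_neg_mul_sq_sub (k m : ℝ) :
    ∫ x, exp (-k * (x - m) ^ 2) = √(π / k) :=
  (integral_sub_right_eq_self (fun x ↦ exp (-k * x ^ 2)) m).trans (integral_gaussian k)

lemma intervalIntegral_exp_neg_mul_sq_sub {k : ℝ} (hk : 0 < k) (m a b : ℝ) :
    ∫ x in a..b, exp (-k * (x - m) ^ 2)
      = √π / (2 * √k) * (erf (√k * (b - m)) - erf (√k * (a - m))) := by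
  have hsk : 0 < √k := sqrt_pos.mpr hk
  have harg : ∀ x, exp (-k * (x - m) ^ 2) = exp (-(√k * x + -(√k * m)) ^ 2) := fun x ↦ by
    rw [show -(√k * x + -(√k * m)) ^ 2 = -√k ^ 2 * (x - m) ^ 2 by ring, sq_sqrt hk.le]
  simp_rw [harg]
  rw [intervalIntegral.integral_comp_mul_add (fun t ↦ exp (-t ^ 2)) hsk.ne',
    intervalIntegral_exp_neg_sq, smul_eq_mul]
  field_simp
  ring_nf

lemma setIntegral_compl_Icc_exp_neg_mul_sq_sub {k : ℝ} (hk : 0 < k) (m : ℝ) {a b : ℝ}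
    (hab : a ≤ b) :
    ∫ x in (Set.Icc a b)ᶜ, exp (-k * (x - m) ^ 2)
      = √π / (2 * √k) * (2 - (erf (√k * (b - m)) - erf (√k * (a - m)))) := by
  have hint : Integrable fun x ↦ exp (-k * (x - m) ^ 2) :=
    (integrable_exp_neg_mul_sq hk).comp_sub_right m
  rw [setIntegral_compl measurableSet_Icc hint, integral_exp_neg_mul_sq_sub,
    integral_Icc_eq_integral_Ioc, ← intervalIntegral.integral_of_le hab,
    intervalIntegral_exp_neg_mul_sq_sub hk, sqrt_div' _ hk.le]
  have : √k ≠ 0 := (sqrt_pos.mpr hk).ne'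
  field_simp

/-- Tilted truncated Gaussian integral (the core of `I_{x1}`):
`∫_{ℝ∖[D,E]} e^{(Ah+B)²/C} dγ₁(h)` in closed form. -/
theorem stmt13 (A B C D E : ℝ) (hC : 2 * A ^ 2 < C) (hDE : D ≤ E)
    (Q : ℝ)
    (hQ : Q = erf ((C * E - 2 * A ^ 2 * E - 2 * A * B) /
          (Real.sqrt 2 * Real.sqrt C * Real.sqrt (C - 2 * A ^ 2)))
      - erf ((C * D - 2 * A ^ 2 * D - 2 * A * B) /
          (Real.sqrt 2 * Real.sqrt C * Real.sqrt (C - 2 * A ^ 2)))) :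
    ∫ h in (Set.Icc D E)ᶜ, Real.exp ((A * h + B) ^ 2 / C) ∂(gaussianReal 0 1)
      = (Real.sqrt C / (2 * Real.sqrt (C - 2 * A ^ 2))) *
          Real.exp (B ^ 2 / (C - 2 * A ^ 2)) * (2 - Q) := by
  have hCpos : 0 < C := lt_of_le_of_lt (by positivity) hC
  have hK : 0 < C - 2 * A ^ 2 := by linarith
  have hsqrt : √((C - 2 * A ^ 2) / (2 * C)) = √(C - 2 * A ^ 2) / (√2 * √C) := by
    rw [sqrt_div hK.le, sqrt_mul zero_le_two]
  have harg : ∀ X, √((C - 2 * A ^ 2) / (2 * C)) * (X - 2 * A * B / (C - 2 * A ^ 2))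
      = (C * X - 2 * A ^ 2 * X - 2 * A * B) / (√2 * √C * √(C - 2 * A ^ 2)) := fun X ↦ by
    rw [hsqrt]
    field_simp
    rw [sq_sqrt hK.le]
  rw [setIntegral_gaussianReal_eq_setIntegral_smul one_ne_zero measurableSet_Icc.compl]
  simp_rw [smul_eq_mul, gaussianPDFReal_mul_exp_sq_div hCpos.ne' hK.ne']
  rw [integral_const_mul, setIntegral_compl_Icc_exp_neg_mul_sq_sub (by positivity) _ hDE,
    harg, harg, ← hQ, hsqrt, sqrt_mul zero_le_two]
  field_simp
end

section
/- Let α > 0, r₂ > 0, c₂ > 0 and q₂ ∈ (0,1). Define g : (0,∞) × (0,1) → ℝ by g(γ, p) = (r₂²/2)·(1 − p·q₂)·c₂ + γ·r₂ + α·r₂·[ (1/(2c₂r₂))·log( (2γ + c₂r₂(1−p))/(2γ) ) + p/(2·(2γ + c₂r₂(1−p))) ]. If (γ̂, p̂) ∈ (0,∞) × (0,1) is a point at which both partial derivatives ∂g/∂γ and ∂g/∂p vanish, then γ̂ = (√α/2)·((1 − p̂)/(1 − q₂))·√(q₂/p̂) and c₂ = (√α/r₂)·( (1/(1 − p̂))·√(p̂/q₂)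 − (1/(1 − q₂))·√(q₂/p̂) ). -/
/-!
With `D = 2γ + c₂r₂(1 - p)`, the two partial derivatives of `g` simplify to
`∂g/∂p = (c₂r₂²/2)(αp/D² - q₂)` and `∂g/∂γ = r₂(1 - α(1-p)/(2γD) - αp/D²)`.
Stationarity therefore means `αp = q₂D²` and `α(1-p) = (1-q₂)·2γD`: the first gives
`D = √α·√(p/q₂)`, the second then gives `γ`, and `c₂` is read off from `c₂r₂(1-p) = D - 2γ`.
-/

open Real

noncomputable section

def dualDenom (c r γ p : ℝ) : ℝ := 2 * γ + c * r * (1 - p)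

def secondLevelDualPart (α r c q γ p : ℝ) : ℝ :=
  (r ^ 2 / 2) * (1 - p * q) * c + γ * r
    + α * r * ((1 / (2 * c * r)) * log (dualDenom c r γ p / (2 * γ))
      + p / (2 * dualDenom c r γ p))

end

section Stationarity

variable {α r c q γ p : ℝ}

theorem hasDerivAt_secondLevelDualPart_fst (hc : c ≠ 0) (hr : r ≠ 0) (hγ : γ ≠ 0)
    (hD : dualDenom c r γ p ≠ 0) :
    HasDerivAt (fun γ => secondLevelDualPart α r c q γ p)
      (r * (1 - α * (1 - p) / (2 * γ * dualDenom c r γ p)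
        - α * p / dualDenom c r γ p ^ 2)) γ := by
  have hden : HasDerivAt (fun γ => dualDenom c r γ p) 2 γ := by
    unfold dualDenom
    simpa using ((hasDerivAt_id γ).const_mul 2).add_const (c * r * (1 - p))
  have htwo : HasDerivAt (fun γ : ℝ => 2 * γ) 2 γ := by
    simpa using (hasDerivAt_id γ).const_mul 2
  have hlog := (hden.div htwo (by positivity)).log (div_ne_zero hD (by positivity))
  have hfrac := (hasDerivAt_const γ p).div (hden.const_mul 2) (mul_ne_zero two_ne_zero hD)
  refine (((hasDerivAt_id γ).mul_const r).const_add ((r ^ 2 / 2) * (1 - p * q) * c) |>.add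
    (((hlog.const_mul (1 / (2 * c * r))).add hfrac).const_mul (α * r))).congr_deriv ?_
  simp only [Pi.div_apply]
  field_simp
  unfold dualDenom
  ring

theorem hasDerivAt_secondLevelDualPart_snd (hc : c ≠ 0) (hr : r ≠ 0) (hγ : γ ≠ 0)
    (hD : dualDenom c r γ p ≠ 0) :
    HasDerivAt (fun p => secondLevelDualPart α r c q γ p)
      (c * r ^ 2 / 2 * (α * p / dualDenom c r γ p ^ 2 - q)) p := by
  have hden : HasDerivAt (fun p => dualDenom c r γ p) (-(c * r)) p := by
    unfold dualDenom
    simpa using (((hasDerivAt_id p).const_sub 1).const_mul (c * r)).const_add (2 * γ)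
  have hlog := (hden.div_const (2 * γ)).log (div_ne_zero hD (by positivity))
  have hfrac := (hasDerivAt_id p).div (hden.const_mul 2) (mul_ne_zero two_ne_zero hD)
  have hquad : HasDerivAt (fun p => (r ^ 2 / 2) * (1 - p * q) * c) ((r ^ 2 / 2) * -q * c) p := by
    simpa using ((((hasDerivAt_id p).mul_const q).const_sub 1).const_mul (r ^ 2 / 2)).mul_const c
  refine ((hquad.add_const (γ * r)).add
    (((hlog.const_mul (1 / (2 * c * r))).add hfrac).const_mul (α * r))).congr_deriv ?_
  simp only [id]
  field_simp
  unfold dualDenom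
  ring

theorem stationary_equations {D : ℝ} (hr : r ≠ 0) (hc : c ≠ 0) (hγ : γ ≠ 0) (hD : D ≠ 0)
    (hγ_deriv : r * (1 - α * (1 - p) / (2 * γ * D) - α * p / D ^ 2) = 0)
    (hp_deriv : c * r ^ 2 / 2 * (α * p / D ^ 2 - q) = 0) :
    α * p = q * D ^ 2 ∧ α * (1 - p) = (1 - q) * (2 * γ * D) := by
  have hq : α * p / D ^ 2 = q :=
    sub_eq_zero.mp ((mul_eq_zero.mp hp_deriv).resolve_left (by positivity))
  have hγ' := (mul_eq_zero.mp hγ_deriv).resolve_left hr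
  rw [hq] at hγ'
  field_simp at hq hγ'
  constructor
  · linear_combination hq
  · linear_combination -hγ'

end Stationarity

theorem eq_sqrt_mul_sqrt_div_of_mul_eq_mul_sq {α p q D : ℝ} (hα : 0 ≤ α) (hq : q ≠ 0)
    (hD : 0 ≤ D) (h : α * p = q * D ^ 2) : D = √α * √(p / q) := by
  rw [← sqrt_mul hα, ← sqrt_sq hD]
  congr 1
  field_simp
  linear_combination -h

theorem stationary_closed_form {α r c p q γ : ℝ} (hα : 0 < α) (hr : r ≠ 0)
    (hp : p ∈ Set.Ioo (0 : ℝ) 1) (hq : q ∈ Set.Ioo (0 : ℝ) 1) (hD : 0 < dualDenom c r γ p)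
    (hpD : α * p = q * dualDenom c r γ p ^ 2)
    (hγD : α * (1 - p) = (1 - q) * (2 * γ * dualDenom c r γ p)) :
    γ = (√α / 2) * ((1 - p) / (1 - q)) * √(q / p) ∧
      c = (√α / r) * ((1 / (1 - p)) * √(p / q) - (1 / (1 - q)) * √(q / p)) := by
  obtain ⟨hp0, hp1⟩ := hp
  obtain ⟨hq0, hq1⟩ := hq
  have hDdef : dualDenom c r γ p = 2 * γ + c * r * (1 - p) := rfl
  have hinv : √(q / p) = (√(p / q))⁻¹ := by rw [← sqrt_inv, inv_div]
  have hsq : √α ^ 2 = α := sq_sqrt hα.le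
  have hs : √α ≠ 0 := (sqrt_pos.mpr hα).ne'
  have ht : √(p / q) ≠ 0 := (sqrt_pos.mpr (div_pos hp0 hq0)).ne'
  have hp1' : 1 - p ≠ 0 := by linarith
  have hq1' : 1 - q ≠ 0 := by linarith
  rw [hinv]
  rw [eq_sqrt_mul_sqrt_div_of_mul_eq_mul_sq hα.le hq0.ne' hD.le hpD] at hDdef hγD
  generalize √α = s at *
  generalize √(p / q) = t at *
  have hγ : γ = (s / 2) * ((1 - p) / (1 - q)) * t⁻¹ := by
    field_simp
    apply mul_left_cancel₀ hs
    linear_combination -hγD - (1 - p) * hsq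
  refine ⟨hγ, ?_⟩
  rw [hγ] at hDdef
  field_simp at hDdef ⊢
  linear_combination -hDdef

/-- Closed-form second-level relations: if `(γ̂, p̂)` is a stationary point of the
`(γ_sq, p₂)`-dependent part `g` of the second-level lifted random dual, then
`γ̂ = (√α/2)((1-p̂)/(1-q₂))√(q₂/p̂)` and
`c₂ = (√α/r₂)((1/(1-p̂))√(p̂/q₂) - (1/(1-q₂))√(q₂/p̂))`. -/
theorem stmt16 (α r₂ c₂ q₂ : ℝ) (hα : 0 < α) (hr : 0 < r₂) (hc : 0 < c₂)
    (hq : q₂ ∈ Set.Ioo (0:ℝ) 1)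
    (g : ℝ → ℝ → ℝ)
    (hg : ∀ γ p, g γ p = (r₂ ^ 2 / 2) * (1 - p * q₂) * c₂ + γ * r₂
      + α * r₂ * ((1 / (2 * c₂ * r₂)) *
          Real.log ((2 * γ + c₂ * r₂ * (1 - p)) / (2 * γ))
        + p / (2 * (2 * γ + c₂ * r₂ * (1 - p)))))
    (γhat phat : ℝ) (hγhat : 0 < γhat) (hphat : phat ∈ Set.Ioo (0:ℝ) 1)
    (h₁ : HasDerivAt (fun γ => g γ phat) 0 γhat)
    (h₂ : HasDerivAt (fun p => g γhat p) 0 phat) :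
    γhat = (Real.sqrt α / 2) * ((1 - phat) / (1 - q₂)) * Real.sqrt (q₂ / phat) ∧
    c₂ = (Real.sqrt α / r₂) * ((1 / (1 - phat)) * Real.sqrt (phat / q₂)
      - (1 / (1 - q₂)) * Real.sqrt (q₂ / phat)) := by
  obtain rfl : g = secondLevelDualPart α r₂ c₂ q₂ := funext₂ hg
  have hD : 0 < dualDenom c₂ r₂ γhat phat := by
    have : 0 < 1 - phat := sub_pos.mpr hphat.2
    unfold dualDenom
    positivity
  obtain ⟨hpD, hγD⟩ := stationary_equations hr.ne' hc.ne' hγhat.ne' hD.ne'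
    ((hasDerivAt_secondLevelDualPart_fst hc.ne' hr.ne' hγhat.ne' hD.ne').unique h₁)
    ((hasDerivAt_secondLevelDualPart_snd hc.ne' hr.ne' hγhat.ne' hD.ne').unique h₂)
  exact stationary_closed_form hα hr.ne' hphat hq hD hpD hγD
end

section
/- Let α > 0, r₂ > 0, c₂ > 0, c₃ > 0 with c₂ ≠ c₃, and 0 < q₃ < q₂ < 1. Define g₃ on the set { (γ, p₂, p₃) : γ > 0, 0 < p₃ < p₂ < 1 } by g₃(γ, p₂, p₃) = (r₂²/2)·(1 − p₂·q₂)·c₂ + (r₂²/2)·(p₂·q₂ − p₃·q₃)·c₃ + γ·r₂ + α·r₂·[ (1/(2c₂r₂))·log( T₂/(2γ) ) + (1/(2c₃r₂))·log( T₃/T₂ ) + p₃/(2T₃) ], where T₂ = 2γ + c₂r₂(1−p₂) and T₃ = 2γ + c₂r₂(1−p₂) + c₃r₂(p₂−p₃). If (γ̂, p̂₂, p̂₃) is a point of this set at which all three partial derivatives ∂g₃/∂γ, ∂g₃/∂p₂, ∂g₃/∂p₃ vanish, then γ̂ = (√α/2)·((1 − p̂₂)/(1 − q₂))·((q₂ −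 q₃)/(p̂₂ − p̂₃))·√(p̂₃/q₃), c₂ = (√α/r₂)·( (1/(1 − p̂₂))·((p̂₂ − p̂₃)/(q₂ − q₃))·√(q₃/p̂₃) − (1/(1 − q₂))·((q₂ − q₃)/(p̂₂ − p̂₃))·√(p̂₃/q₃) ), and c₃ = (√α/r₂)·( (1/(p̂₂ − p̂₃))·√(p̂₃/q₃) − (1/(q₂ − q₃))·√(q₃/p̂₃) ). -/
/-! With `T₂ = 2γ + c₂ r₂ (1 - p₂)` and `T₃ = T₂ + c₃ r₂ (p₂ - p₃)`, put
`A = α p₃ / T₃²`, `B = α (p₂ - p₃) / (T₂ T₃)` and `C = α (1 - p₂) / (2γ T₂)`. The partial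
derivatives of `g₃` factor as
`∂γ = r₂ (1 - C - B - A)`, `∂p₂ = r₂² (c₃ - c₂) / 2 · (q₂ - B - A)`, `∂p₃ = r₂² c₃ / 2 · (A - q₃)`,
so at a stationary point `A = q₃`, `B = q₂ - q₃` and `C = 1 - q₂`. These determine `T₃`,
then `T₂`, then `γ`, and `c₂`, `c₃` are read off from the definitions of `T₂` and `T₃`. -/

open Real

theorem HasDerivAt.log_div {f g : ℝ → ℝ} {f' g' x : ℝ} (hf : HasDerivAt f f' x)
    (hg : HasDerivAt g g' x) (hfx : f x ≠ 0) (hgx : g x ≠ 0) :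
    HasDerivAt (fun y => Real.log (f y / g y)) (f' / f x - g' / g x) x :=
  ((hf.div hg hgx).log (div_ne_zero hfx hgx)).congr_deriv
    (by simp only [Pi.div_apply]; field_simp)

theorem eq_sqrt_mul_sqrt_of_div_sq {x α p q : ℝ} (hx : 0 < x) (hα : 0 ≤ α) (hq : q ≠ 0)
    (h : α * p / x ^ 2 = q) : x = √α * √(p / q) := by
  have hαp : α * p ≠ 0 := by
    rintro h0
    rw [h0, zero_div] at h
    exact hq h.symm
  rw [← sqrt_mul hα, ← mul_div_assoc, ← h, div_div_cancel₀ hαp, sqrt_sq hx.le]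

namespace LiftedDual

variable (α r₂ c₂ c₃ q₂ q₃ : ℝ)

def T₂ (γ p₂ : ℝ) : ℝ := 2 * γ + c₂ * r₂ * (1 - p₂)

def T₃ (γ p₂ p₃ : ℝ) : ℝ := T₂ r₂ c₂ γ p₂ + c₃ * r₂ * (p₂ - p₃)

noncomputable def objective (γ p₂ p₃ : ℝ) : ℝ :=
  (r₂ ^ 2 / 2) * (1 - p₂ * q₂) * c₂ + (r₂ ^ 2 / 2) * (p₂ * q₂ - p₃ * q₃) * c₃ + γ * r₂
    + α * r₂ * ((1 / (2 * c₂ * r₂)) * log (T₂ r₂ c₂ γ p₂ / (2 * γ))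
      + (1 / (2 * c₃ * r₂)) * log (T₃ r₂ c₂ c₃ γ p₂ p₃ / T₂ r₂ c₂ γ p₂)
      + p₃ / (2 * T₃ r₂ c₂ c₃ γ p₂ p₃))

variable {α r₂ c₂ c₃ q₂ q₃}

theorem hasDerivAt_objective_γ {γ p₂ p₃ : ℝ} (hr : r₂ ≠ 0) (hc₂ : c₂ ≠ 0) (hc₃ : c₃ ≠ 0)
    (hγ : γ ≠ 0) (hT₂ : T₂ r₂ c₂ γ p₂ ≠ 0) (hT₃ : T₃ r₂ c₂ c₃ γ p₂ p₃ ≠ 0) :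
    HasDerivAt (fun γ => objective α r₂ c₂ c₃ q₂ q₃ γ p₂ p₃)
      (r₂ * (1 - α * (1 - p₂) / (2 * γ * T₂ r₂ c₂ γ p₂)
        - α * (p₂ - p₃) / (T₂ r₂ c₂ γ p₂ * T₃ r₂ c₂ c₃ γ p₂ p₃)
        - α * p₃ / T₃ r₂ c₂ c₃ γ p₂ p₃ ^ 2)) γ := by
  have hlin : HasDerivAt (fun γ : ℝ => 2 * γ) 2 γ :=
    ((hasDerivAt_id' γ).const_mul 2).congr_deriv (mul_one 2)
  have h2 : HasDerivAt (fun γ => T₂ r₂ c₂ γ p₂) 2 γ := hlin.add_const _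
  have h3 : HasDerivAt (fun γ => T₃ r₂ c₂ c₃ γ p₂ p₃) 2 γ := h2.add_const _
  have hlog₂ := (h2.log_div hlin hT₂ (by positivity)).const_mul (1 / (2 * c₂ * r₂))
  have hlog₃ := (h3.log_div h2 hT₃ hT₂).const_mul (1 / (2 * c₃ * r₂))
  have hfrac := (hasDerivAt_const γ p₃).div (h3.const_mul 2) (by positivity)
  refine ((((hasDerivAt_id γ).mul_const r₂).const_add _).add
    (((hlog₂.add hlog₃).add hfrac).const_mul (α * r₂))).congr_deriv ?_
  field_simp
  simp only [T₃, T₂]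
  ring

theorem hasDerivAt_objective_p₂ {γ p₂ p₃ : ℝ} (hr : r₂ ≠ 0) (hc₂ : c₂ ≠ 0) (hc₃ : c₃ ≠ 0)
    (hγ : γ ≠ 0) (hT₂ : T₂ r₂ c₂ γ p₂ ≠ 0) (hT₃ : T₃ r₂ c₂ c₃ γ p₂ p₃ ≠ 0) :
    HasDerivAt (fun p₂ => objective α r₂ c₂ c₃ q₂ q₃ γ p₂ p₃)
      (r₂ ^ 2 * (c₃ - c₂) / 2 * (q₂ - α * (p₂ - p₃) / (T₂ r₂ c₂ γ p₂ * T₃ r₂ c₂ c₃ γ p₂ p₃)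
        - α * p₃ / T₃ r₂ c₂ c₃ γ p₂ p₃ ^ 2)) p₂ := by
  have h2 : HasDerivAt (fun p₂ => T₂ r₂ c₂ γ p₂) (-(c₂ * r₂)) p₂ :=
    (((hasDerivAt_id p₂).const_sub 1).const_mul (c₂ * r₂)).const_add (2 * γ) |>.congr_deriv
      (by ring)
  have h3 : HasDerivAt (fun p₂ => T₃ r₂ c₂ c₃ γ p₂ p₃) ((c₃ - c₂) * r₂) p₂ :=
    (h2.add (((hasDerivAt_id p₂).sub_const p₃).const_mul (c₃ * r₂))).congr_deriv (by ring)
  have hq := (hasDerivAt_id p₂).mul_const q₂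
  have hquad := (((hq.const_sub 1).const_mul (r₂ ^ 2 / 2)).mul_const c₂).add
    (((hq.sub_const (p₃ * q₃)).const_mul (r₂ ^ 2 / 2)).mul_const c₃) |>.add_const (γ * r₂)
  have hlog₂ := (h2.log_div (hasDerivAt_const p₂ (2 * γ)) hT₂ (by positivity)).const_mul
    (1 / (2 * c₂ * r₂))
  have hlog₃ := (h3.log_div h2 hT₃ hT₂).const_mul (1 / (2 * c₃ * r₂))
  have hfrac := (hasDerivAt_const p₂ p₃).div (h3.const_mul 2) (by positivity)
  refine (hquad.add (((hlog₂.add hlog₃).add hfrac).const_mul (α * r₂))).congr_deriv ?_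
  field_simp
  simp only [T₃, T₂]
  ring

theorem hasDerivAt_objective_p₃ {γ p₂ p₃ : ℝ} (hr : r₂ ≠ 0) (hc₃ : c₃ ≠ 0)
    (hT₂ : T₂ r₂ c₂ γ p₂ ≠ 0) (hT₃ : T₃ r₂ c₂ c₃ γ p₂ p₃ ≠ 0) :
    HasDerivAt (fun p₃ => objective α r₂ c₂ c₃ q₂ q₃ γ p₂ p₃)
      (r₂ ^ 2 * c₃ / 2 * (α * p₃ / T₃ r₂ c₂ c₃ γ p₂ p₃ ^ 2 - q₃)) p₃ := by
  have h3 : HasDerivAt (fun p₃ => T₃ r₂ c₂ c₃ γ p₂ p₃) (-(c₃ * r₂)) p₃ :=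
    (((hasDerivAt_id p₃).const_sub p₂).const_mul (c₃ * r₂)).const_add (T₂ r₂ c₂ γ p₂)
      |>.congr_deriv (by ring)
  have hquad := ((((hasDerivAt_id p₃).mul_const q₃).const_sub (p₂ * q₂)).const_mul
    (r₂ ^ 2 / 2)).mul_const c₃ |>.const_add (r₂ ^ 2 / 2 * (1 - p₂ * q₂) * c₂)
    |>.add_const (γ * r₂)
  have hlog₃ := (h3.log_div (hasDerivAt_const p₃ (T₂ r₂ c₂ γ p₂)) hT₃ hT₂).const_mul
    (1 / (2 * c₃ * r₂))
  have hfrac := (hasDerivAt_id' p₃).div (h3.const_mul 2) (by positivity)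
  refine (hquad.add ((((hasDerivAt_const p₃ _).add hlog₃).add hfrac).const_mul
    (α * r₂))).congr_deriv ?_
  field_simp
  simp only [T₃, T₂]
  ring

theorem stationary_equations {γ p₂ p₃ : ℝ} (hr : r₂ ≠ 0) (hc₂ : c₂ ≠ 0) (hc₃ : c₃ ≠ 0)
    (hcc : c₂ ≠ c₃) (hγ : γ ≠ 0) (hT₂ : T₂ r₂ c₂ γ p₂ ≠ 0) (hT₃ : T₃ r₂ c₂ c₃ γ p₂ p₃ ≠ 0)
    (h₁ : HasDerivAt (fun γ => objective α r₂ c₂ c₃ q₂ q₃ γ p₂ p₃) 0 γ)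
    (h₂ : HasDerivAt (fun p₂ => objective α r₂ c₂ c₃ q₂ q₃ γ p₂ p₃) 0 p₂)
    (h₃ : HasDerivAt (fun p₃ => objective α r₂ c₂ c₃ q₂ q₃ γ p₂ p₃) 0 p₃) :
    α * p₃ / T₃ r₂ c₂ c₃ γ p₂ p₃ ^ 2 = q₃ ∧
      α * (p₂ - p₃) / (T₂ r₂ c₂ γ p₂ * T₃ r₂ c₂ c₃ γ p₂ p₃) = q₂ - q₃ ∧
      α * (1 - p₂) / (2 * γ * T₂ r₂ c₂ γ p₂) = 1 - q₂ := by
  have e₁ := (hasDerivAt_objective_γ hr hc₂ hc₃ hγ hT₂ hT₃).unique h₁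
  have e₂ := (hasDerivAt_objective_p₂ hr hc₂ hc₃ hγ hT₂ hT₃).unique h₂
  have e₃ := (hasDerivAt_objective_p₃ (c₂ := c₂) hr hc₃ hT₂ hT₃).unique h₃
  have hc : c₃ - c₂ ≠ 0 := sub_ne_zero.2 hcc.symm
  simp only [mul_eq_zero, hr, hc, hc₃, div_eq_zero_iff, pow_eq_zero_iff, sub_eq_zero, false_or,
    OfNat.ofNat_ne_zero, ne_eq, not_false_eq_true, or_false] at e₁ e₂ e₃
  refine ⟨e₃, ?_, ?_⟩ <;> linarith

theorem closed_form_of_stationary_equations {a s q₂ q₃ γ p₂ p₃ : ℝ} (hr : r₂ ≠ 0)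
    (hp₂ : p₂ ≠ 1) (hp₂₃ : p₂ ≠ p₃) (hq₂ : q₂ ≠ 1) (hq₂₃ : q₂ ≠ q₃) (hγ : γ ≠ 0)
    (hT₂ : T₂ r₂ c₂ γ p₂ ≠ 0) (hT₃ : T₃ r₂ c₂ c₃ γ p₂ p₃ = a * s)
    (hB : a ^ 2 * (p₂ - p₃) / (T₂ r₂ c₂ γ p₂ * T₃ r₂ c₂ c₃ γ p₂ p₃) = q₂ - q₃)
    (hC : a ^ 2 * (1 - p₂) / (2 * γ * T₂ r₂ c₂ γ p₂) = 1 - q₂) :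
    γ = a / 2 * ((1 - p₂) / (1 - q₂)) * ((q₂ - q₃) / (p₂ - p₃)) * s ∧
    c₂ = a / r₂ * (1 / (1 - p₂) * ((p₂ - p₃) / (q₂ - q₃)) * s⁻¹
      - 1 / (1 - q₂) * ((q₂ - q₃) / (p₂ - p₃)) * s) ∧
    c₃ = a / r₂ * (1 / (p₂ - p₃) * s - 1 / (q₂ - q₃) * s⁻¹) := by
  have h1p : 1 - p₂ ≠ 0 := sub_ne_zero.2 hp₂.symm
  have h1q : 1 - q₂ ≠ 0 := sub_ne_zero.2 hq₂.symm
  have hpp : p₂ - p₃ ≠ 0 := sub_ne_zero.2 hp₂₃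
  have hqq : q₂ - q₃ ≠ 0 := sub_ne_zero.2 hq₂₃
  have hT₂val : T₂ r₂ c₂ γ p₂ = a * (p₂ - p₃) / ((q₂ - q₃) * s) := by
    rw [hT₃] at hB
    field_simp at hB ⊢
    linear_combination -hB
  have hγval : γ = a / 2 * ((1 - p₂) / (1 - q₂)) * ((q₂ - q₃) / (p₂ - p₃)) * s := by
    rw [hT₂val] at hC
    field_simp at hC ⊢
    linear_combination -hC
  have hc₂val : c₂ = (T₂ r₂ c₂ γ p₂ - 2 * γ) / (r₂ * (1 - p₂)) := by
    rw [eq_div_iff (mul_ne_zero hr h1p), T₂]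
    ring
  have hc₃val : c₃ = (T₃ r₂ c₂ c₃ γ p₂ p₃ - T₂ r₂ c₂ γ p₂) / (r₂ * (p₂ - p₃)) := by
    rw [eq_div_iff (mul_ne_zero hr hpp), T₃]
    ring
  refine ⟨hγval, ?_, ?_⟩
  · rw [hc₂val, hT₂val, hγval]
    field_simp
  · rw [hc₃val, hT₃, hT₂val]
    field_simp

end LiftedDual

open LiftedDual

theorem stmt17_general (α r₂ c₂ c₃ q₂ q₃ : ℝ) (hα : 0 < α) (hr : 0 < r₂)
    (hc₂ : 0 < c₂) (hc₃ : 0 < c₃) (hcc : c₂ ≠ c₃)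
    (hq₃ : 0 < q₃) (hq₂₃ : q₃ < q₂) (hq₂ : q₂ < 1)
    (g₃ : ℝ → ℝ → ℝ → ℝ)
    (hg₃ : ∀ γ p₂ p₃, g₃ γ p₂ p₃ =
      (r₂ ^ 2 / 2) * (1 - p₂ * q₂) * c₂ + (r₂ ^ 2 / 2) * (p₂ * q₂ - p₃ * q₃) * c₃
      + γ * r₂
      + α * r₂ * ((1 / (2 * c₂ * r₂)) *
            Real.log ((2 * γ + c₂ * r₂ * (1 - p₂)) / (2 * γ))
          + (1 / (2 * c₃ * r₂)) *
            Real.log ((2 * γ + c₂ * r₂ * (1 - p₂) + c₃ * r₂ * (p₂ - p₃)) /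
              (2 * γ + c₂ * r₂ * (1 - p₂)))
          + p₃ / (2 * (2 * γ + c₂ * r₂ * (1 - p₂) + c₃ * r₂ * (p₂ - p₃)))))
    (γhat p₂hat p₃hat : ℝ) (hγhat : 0 < γhat)
    (hp₂₃hat : p₃hat < p₂hat) (hp₂hat : p₂hat < 1)
    (h₁ : HasDerivAt (fun γ => g₃ γ p₂hat p₃hat) 0 γhat)
    (h₂ : HasDerivAt (fun p₂ => g₃ γhat p₂ p₃hat) 0 p₂hat)
    (h₃ : HasDerivAt (fun p₃ => g₃ γhat p₂hat p₃) 0 p₃hat) :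
    γhat = (Real.sqrt α / 2) * ((1 - p₂hat) / (1 - q₂)) *
        ((q₂ - q₃) / (p₂hat - p₃hat)) * Real.sqrt (p₃hat / q₃) ∧
    c₂ = (Real.sqrt α / r₂) *
        ((1 / (1 - p₂hat)) * ((p₂hat - p₃hat) / (q₂ - q₃)) * Real.sqrt (q₃ / p₃hat)
          - (1 / (1 - q₂)) * ((q₂ - q₃) / (p₂hat - p₃hat)) * Real.sqrt (p₃hat / q₃)) ∧
    c₃ = (Real.sqrt α / r₂) *
        ((1 / (p₂hat - p₃hat)) * Real.sqrt (p₃hat / q₃)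
          - (1 / (q₂ - q₃)) * Real.sqrt (q₃ / p₃hat)) := by
  have hg : g₃ = objective α r₂ c₂ c₃ q₂ q₃ :=
    funext fun γ => funext fun p₂ => funext fun p₃ => hg₃ γ p₂ p₃
  subst hg
  have hT₂ : 0 < T₂ r₂ c₂ γhat p₂hat := by
    have := mul_pos (mul_pos hc₂ hr) (sub_pos.2 hp₂hat)
    unfold T₂
    linarith
  have hT₃ : 0 < T₃ r₂ c₂ c₃ γhat p₂hat p₃hat := by
    have := mul_pos (mul_pos hc₃ hr) (sub_pos.2 hp₂₃hat)
    unfold T₃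
    linarith
  obtain ⟨hA, hB, hC⟩ := stationary_equations hr.ne' hc₂.ne' hc₃.ne' hcc hγhat.ne' hT₂.ne'
    hT₃.ne' h₁ h₂ h₃
  have hT₃val := eq_sqrt_mul_sqrt_of_div_sq hT₃ hα.le hq₃.ne' hA
  rw [← sq_sqrt hα.le] at hB hC
  rw [← inv_div p₃hat, sqrt_inv]
  exact closed_form_of_stationary_equations hr.ne' hp₂hat.ne hp₂₃hat.ne' hq₂.ne hq₂₃.ne'
    hγhat.ne' hT₂.ne' hT₃val hB hC

/-- Closed-form third-level relations: if `(γ̂, p̂₂, p̂₃)` is a stationary point of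
the `(γ_sq, p₂, p₃)`-dependent part `g₃` of the third-level lifted random dual,
then `γ̂`, `c₂` and `c₃` satisfy the stated closed-form expressions. -/
theorem stmt17 (α r₂ c₂ c₃ q₂ q₃ : ℝ) (hα : 0 < α) (hr : 0 < r₂)
    (hc₂ : 0 < c₂) (hc₃ : 0 < c₃) (hcc : c₂ ≠ c₃)
    (hq₃ : 0 < q₃) (hq₂₃ : q₃ < q₂) (hq₂ : q₂ < 1)
    (g₃ : ℝ → ℝ → ℝ → ℝ)
    (hg₃ : ∀ γ p₂ p₃, g₃ γ p₂ p₃ =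
      (r₂ ^ 2 / 2) * (1 - p₂ * q₂) * c₂ + (r₂ ^ 2 / 2) * (p₂ * q₂ - p₃ * q₃) * c₃
      + γ * r₂
      + α * r₂ * ((1 / (2 * c₂ * r₂)) *
            Real.log ((2 * γ + c₂ * r₂ * (1 - p₂)) / (2 * γ))
          + (1 / (2 * c₃ * r₂)) *
            Real.log ((2 * γ + c₂ * r₂ * (1 - p₂) + c₃ * r₂ * (p₂ - p₃)) /
              (2 * γ + c₂ * r₂ * (1 - p₂)))
          + p₃ / (2 * (2 * γ + c₂ * r₂ * (1 - p₂) + c₃ * r₂ * (p₂ - p₃)))))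
    (γhat p₂hat p₃hat : ℝ) (hγhat : 0 < γhat)
    (hp₃hat : 0 < p₃hat) (hp₂₃hat : p₃hat < p₂hat) (hp₂hat : p₂hat < 1)
    (h₁ : HasDerivAt (fun γ => g₃ γ p₂hat p₃hat) 0 γhat)
    (h₂ : HasDerivAt (fun p₂ => g₃ γhat p₂ p₃hat) 0 p₂hat)
    (h₃ : HasDerivAt (fun p₃ => g₃ γhat p₂hat p₃) 0 p₃hat) :
    γhat = (Real.sqrt α / 2) * ((1 - p₂hat) / (1 - q₂)) *
        ((q₂ - q₃) / (p₂hat - p₃hat)) * Real.sqrt (p₃hat / q₃) ∧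
    c₂ = (Real.sqrt α / r₂) *
        ((1 / (1 - p₂hat)) * ((p₂hat - p₃hat) / (q₂ - q₃)) * Real.sqrt (q₃ / p₃hat)
          - (1 / (1 - q₂)) * ((q₂ - q₃) / (p₂hat - p₃hat)) * Real.sqrt (p₃hat / q₃)) ∧
    c₃ = (Real.sqrt α / r₂) *
        ((1 / (p₂hat - p₃hat)) * Real.sqrt (p₃hat / q₃)
          - (1 / (q₂ - q₃)) * Real.sqrt (q₃ / p₃hat)) :=
  stmt17_general α r₂ c₂ c₃ q₂ q₃ hα hr hc₂ hc₃ hcc hq₃ hq₂₃ hq₂ g₃ hg₃ γhat p₂hat p₃hat hγhat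
    hp₂₃hat hp₂hat h₁ h₂ h₃
end
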